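/- For integers j ≥ 0 and a parameter ζ with |ζ| < 1 and |q| < 1, one has ∑_{i=0}^{j} (-1)^i q^{i(i-1)/2} [j choose i]_q · ∑_{k=0}^{i-1} 1/(1 - ζ q^k) = - (q;q)_{j-1} / (ζ;q)_j, where for j = 0 the right-hand side is interpreted as 0. -/

import Mathlib

/-! Abel summation moves the inner sum `∑_{k<i} 1/(1 - ζ q^k)` outside, leaving the partial
sums of the row `(-1)^i q^(i choose 2) [j, i]_q`; by the q-Pascal rule these telescope to
`(-1)^k q^(k+1 choose 2) [j-1, k]_q`, and the full row sums to zero. What remains is the partial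
fraction expansion of `(q;q)_{j-1} / (ζ;q)_j`, which follows by induction on `j` from the other
q-Pascal rule, comparing the expansions at `ζ` and `ζ q`. -/

noncomputable def qPoch (z q : ℝ) (m : ℕ) : ℝ := ∏ j ∈ Finset.range m, (1 - z * q ^ j)

noncomputable def qBinom (q : ℝ) (m l : ℕ) : ℝ :=
  if l ≤ m then qPoch q q m / (qPoch q q l * qPoch q q (m - l)) else 0

open Finset

section QPochhammer

variable {z q : ℝ}

lemma qPoch_zero (z q : ℝ) : qPoch z q 0 = 1 := prod_range_zero _

lemma qPoch_succ (z q : ℝ) (n : ℕ) : qPoch z q (n + 1) = qPoch z q n * (1 - z * q ^ n) :=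
  prod_range_succ _ _

lemma qPoch_succ' (z q : ℝ) (n : ℕ) : qPoch z q (n + 1) = (1 - z) * qPoch (z * q) q n := by
  simp only [qPoch, prod_range_succ', pow_succ, pow_zero, mul_one, mul_assoc, mul_comm]

lemma qPoch_ne_zero (hz : |z| < 1) (hq : |q| ≤ 1) (n : ℕ) : qPoch z q n ≠ 0 := by
  refine prod_ne_zero_iff.2 fun k _ h => ?_
  have hlt : |z * q ^ k| < 1 := by
    rw [abs_mul, abs_pow]
    calc |z| * |q| ^ k ≤ |z| :=
          mul_le_of_le_one_right (abs_nonneg z) (pow_le_one₀ (abs_nonneg q) hq)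
      _ < 1 := hz
  rw [← sub_eq_zero.mp h, abs_one] at hlt
  exact lt_irrefl 1 hlt

end QPochhammer

section QBinomial

variable {q : ℝ}

lemma qBinom_add (a b : ℕ) :
    qBinom q (a + b) a = qPoch q q (a + b) / (qPoch q q a * qPoch q q b) := by
  rw [qBinom, if_pos (Nat.le_add_right a b), Nat.add_sub_cancel_left]

lemma qBinom_of_lt {m l : ℕ} (h : m < l) : qBinom q m l = 0 :=
  if_neg (Nat.not_le.2 h)

lemma qBinom_self {m : ℕ} (h : qPoch q q m ≠ 0) : qBinom q m m = 1 := by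
  simpa [qPoch_zero, h] using qBinom_add (q := q) m 0

lemma qBinom_zero_right {m : ℕ} (h : qPoch q q m ≠ 0) : qBinom q m 0 = 1 := by
  simpa [qPoch_zero, h] using qBinom_add (q := q) 0 m

variable (hq : ∀ n, qPoch q q n ≠ 0)
include hq

lemma one_sub_mul_pow_ne_zero (n : ℕ) : 1 - q * q ^ n ≠ 0 :=
  right_ne_zero_of_mul (qPoch_succ q q n ▸ hq (n + 1))

lemma qBinom_succ_succ (m k : ℕ) :
    qBinom q (m + 1) (k + 1) = qBinom q m k + q ^ (k + 1) * qBinom q m (k + 1) := by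
  rcases lt_trichotomy k m with hlt | rfl | hgt
  · obtain ⟨b, rfl⟩ : ∃ b, m = k + (b + 1) := ⟨m - k - 1, by omega⟩
    have h₁ := qBinom_add (q := q) (k + 1) (b + 1)
    have h₂ := qBinom_add (q := q) k (b + 1)
    have h₃ := qBinom_add (q := q) (k + 1) b
    rw [show k + 1 + (b + 1) = k + (b + 1) + 1 by ring] at h₁
    rw [show k + 1 + b = k + (b + 1) by ring] at h₃
    rw [h₁, h₂, h₃]
    have := hq k; have := hq b; have := hq (k + (b + 1))
    have := one_sub_mul_pow_ne_zero hq k; have := one_sub_mul_pow_ne_zero hq b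
    rw [qPoch_succ q q (k + (b + 1)), qPoch_succ q q k, qPoch_succ q q b]
    field_simp
    ring
  · rw [qBinom_self (hq _), qBinom_self (hq _), qBinom_of_lt (Nat.lt_succ_self k)]
    ring
  · rw [qBinom_of_lt hgt, qBinom_of_lt (by omega), qBinom_of_lt (by omega)]
    ring

lemma qBinom_succ_succ' (m k : ℕ) :
    qBinom q (m + 1) (k + 1) = qBinom q m (k + 1) + q ^ (m - k) * qBinom q m k := by
  rcases lt_trichotomy k m with hlt | rfl | hgt
  · obtain ⟨b, rfl⟩ : ∃ b, m = k + (b + 1) := ⟨m - k - 1, by omega⟩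
    have h₁ := qBinom_add (q := q) (k + 1) (b + 1)
    have h₂ := qBinom_add (q := q) k (b + 1)
    have h₃ := qBinom_add (q := q) (k + 1) b
    rw [show k + 1 + (b + 1) = k + (b + 1) + 1 by ring] at h₁
    rw [show k + 1 + b = k + (b + 1) by ring] at h₃
    rw [h₁, h₂, h₃, Nat.add_sub_cancel_left]
    have := hq k; have := hq b; have := hq (k + (b + 1))
    have := one_sub_mul_pow_ne_zero hq k; have := one_sub_mul_pow_ne_zero hq b
    rw [qPoch_succ q q (k + (b + 1)), qPoch_succ q q k, qPoch_succ q q b]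
    field_simp
    ring
  · rw [qBinom_self (hq _), qBinom_self (hq _), qBinom_of_lt (Nat.lt_succ_self k), Nat.sub_self]
    ring
  · rw [qBinom_of_lt hgt, qBinom_of_lt (by omega), qBinom_of_lt (by omega)]
    ring

lemma sum_range_alternating_qBinom (m k : ℕ) :
    ∑ i ∈ range (k + 1), (-1) ^ i * q ^ i.choose 2 * qBinom q (m + 1) i
      = (-1) ^ k * q ^ (k + 1).choose 2 * qBinom q m k := by
  induction k with
  | zero => simp [qBinom_zero_right (hq _)]
  | succ k ih =>
    rw [sum_range_succ, ih, qBinom_succ_succ hq, Nat.choose_succ_succ' (k + 1),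
      Nat.choose_one_right]
    ring

lemma alternating_qBinom_succ_succ (m k : ℕ) :
    (-1) ^ (k + 1) * q ^ (k + 2).choose 2 * qBinom q (m + 1) (k + 1)
      = (-1) ^ (k + 1) * q ^ (k + 2).choose 2 * qBinom q m (k + 1)
        - q ^ (m + 1) * ((-1) ^ k * q ^ (k + 1).choose 2 * qBinom q m k) := by
  rcases le_or_gt k m with hle | hgt
  · obtain ⟨d, rfl⟩ := Nat.exists_eq_add_of_le hle
    rw [qBinom_succ_succ' hq, Nat.add_sub_cancel_left, Nat.choose_succ_succ' (k + 1),
      Nat.choose_one_right]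
    ring
  · simp [qBinom_of_lt hgt, qBinom_of_lt (Nat.lt_succ_of_lt hgt),
      qBinom_of_lt (Nat.succ_lt_succ hgt)]

lemma sum_range_alternating_qBinom_div (m : ℕ) {z : ℝ} (hz : qPoch z q (m + 1) ≠ 0) :
    ∑ k ∈ range (m + 1), (-1) ^ k * q ^ (k + 1).choose 2 * qBinom q m k / (1 - z * q ^ k)
      = qPoch q q m / qPoch z q (m + 1) := by
  induction m generalizing z with
  | zero => simp [qBinom_self (hq 0), qPoch_succ, qPoch_zero]
  | succ m ih =>
    have hz₁ : qPoch z q (m + 1) ≠ 0 := left_ne_zero_of_mul (qPoch_succ z q (m + 1) ▸ hz)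
    have hzq : qPoch (z * q) q (m + 1) ≠ 0 :=
      right_ne_zero_of_mul (qPoch_succ' z q (m + 1) ▸ hz)
    calc _ = ∑ k ∈ range (m + 2),
            (-1) ^ k * q ^ (k + 1).choose 2 * qBinom q m k / (1 - z * q ^ k)
          - q ^ (m + 1) * ∑ k ∈ range (m + 1),
            (-1) ^ k * q ^ (k + 1).choose 2 * qBinom q m k / (1 - z * q * q ^ k) := by
          rw [sum_range_succ' _ (m + 1), sum_range_succ' _ (m + 1), mul_sum, add_sub_right_comm,
            ← sum_sub_distrib]
          congr 1
          · refine sum_congr rfl fun k _ => ?_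
            rw [alternating_qBinom_succ_succ hq, pow_succ q k]
            ring
          · simp [qBinom_zero_right (hq _)]
      _ = qPoch q q m / qPoch z q (m + 1)
          - q ^ (m + 1) * (qPoch q q m / qPoch (z * q) q (m + 1)) := by
          rw [sum_range_succ, qBinom_of_lt (Nat.lt_succ_self m), ih hz₁, ih hzq]
          simp
      _ = qPoch q q (m + 1) / qPoch z q (m + 1 + 1) := by
          have hP₁ := qPoch_succ z q (m + 1)
          have hP₂ := qPoch_succ' z q (m + 1)
          rw [qPoch_succ q q m]
          field_simp
          linear_combination (qPoch q q m * qPoch (z * q) q (m + 1)) * hP₁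
            - (q ^ (m + 1) * qPoch q q m * qPoch z q (m + 1)) * hP₂

end QBinomial

theorem alternating_qbinom_sum_general (q ζ : ℝ) (j : ℕ) (hq : |q| < 1)
    (hne : ∀ k < j, 1 - ζ * q ^ k ≠ 0) :
    ∑ i ∈ Finset.range (j + 1),
        (-1 : ℝ) ^ i * q ^ (i * (i - 1) / 2) * qBinom q j i *
          (∑ k ∈ Finset.range i, 1 / (1 - ζ * q ^ k))
      = if j = 0 then 0 else -(qPoch q q (j - 1)) / qPoch ζ q j := by
  have hqq : ∀ n, qPoch q q n ≠ 0 := qPoch_ne_zero hq hq.le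
  have hζ : qPoch ζ q j ≠ 0 := prod_ne_zero_iff.2 fun k hk => hne k (mem_range.1 hk)
  rcases j with _ | m
  · simp
  simp only [← Nat.choose_two_right, Nat.add_one_ne_zero, if_false, Nat.add_sub_cancel]
  calc _ = ∑ i ∈ range (m + 1 + 1), (∑ k ∈ range i, 1 / (1 - ζ * q ^ k)) •
          ((-1 : ℝ) ^ i * q ^ i.choose 2 * qBinom q (m + 1) i) := by
        simp only [smul_eq_mul, mul_comm]
    _ = -∑ k ∈ range (m + 1),
          (-1) ^ k * q ^ (k + 1).choose 2 * qBinom q m k / (1 - ζ * q ^ k) := by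
        rw [sum_range_by_parts]
        simp only [sum_range_succ_sub_sum, sum_range_alternating_qBinom hqq,
          qBinom_of_lt (Nat.lt_succ_self m), mul_zero, zero_sub, Nat.add_sub_cancel,
          smul_eq_mul, one_div_mul_eq_div]
    _ = _ := by rw [sum_range_alternating_qBinom_div hqq m hζ, neg_div]

theorem alternating_qbinom_sum (q ζ : ℝ) (j : ℕ) (hq : |q| < 1) (hζ : |ζ| < 1)
    (hne : ∀ k < j, 1 - ζ * q ^ k ≠ 0) :
    ∑ i ∈ Finset.range (j + 1),
        (-1 : ℝ) ^ i * q ^ (i * (i - 1) / 2) * qBinom q j i *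
          (∑ k ∈ Finset.range i, 1 / (1 - ζ * q ^ k))
      = if j = 0 then 0 else -(qPoch q q (j - 1)) / qPoch ζ q j :=
  alternating_qbinom_sum_general q ζ j hq hne
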